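/- Let G = (X ∪ Y, E) be a connected 3-regular bipartite graph with a color-blind distinguishing 2-edge-coloring. Then at least one of the two associated 3-regular 3-uniform hypergraphs H_X, H_Y is 2-colorable, where V(H_X) = X and the edges of H_X are the neighborhoods N_G(y) for y ∈ Y (and symmetrically for H_Y). -/
import Mathlib

open Finset

set_option linter.unusedSectionVars false

def cbp {V : Type*} [Fintype V] [DecidableEq V] (G : SimpleGraph V) [DecidableRel G.Adj]
    {k : ℕ} (c : Sym2 V → Fin k) (v : V) : Multiset ℕ :=
  (((Finset.univ : Finset (Fin k)).val.map fun i =>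
    ((G.neighborFinset v).filter fun w => c s(v, w) = i).card).filter fun m => m ≠ 0)

def IsCBD {V : Type*} [Fintype V] [DecidableEq V] (G : SimpleGraph V) [DecidableRel G.Adj]
    {k : ℕ} (c : Sym2 V → Fin k) : Prop :=
  ∀ u v : V, G.Adj u v → cbp G c u ≠ cbp G c v

section Aux
variable {V : Type*} [Fintype V] [DecidableEq V] (G : SimpleGraph V) [DecidableRel G.Adj]
  (c : Sym2 V → Fin 2)

def g0 (v : V) : ℕ := ((G.neighborFinset v).filter fun w => c s(v, w) = 0).card

lemma g0_le (v : V) (hdeg : G.degree v = 3) : g0 G c v ≤ 3 := by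
  rw [← hdeg]; exact Finset.card_filter_le _ _

lemma card_filter_one (v : V) (hdeg : G.degree v = 3) :
    ((G.neighborFinset v).filter fun w => c s(v, w) = 1).card = 3 - g0 G c v := by
  have h2 : ∀ a : Fin 2, ¬ a = 0 ↔ a = 1 := by decide
  have h := Finset.card_filter_add_card_filter_not
    (s := G.neighborFinset v) (p := fun w => c s(v, w) = 0)
  rw [Finset.filter_congr (fun w _ => h2 (c s(v, w)))] at h
  have hcard : (G.neighborFinset v).card = 3 := hdeg
  unfold g0; omega

lemma cbp_eval (v : V) (hdeg : G.degree v = 3) :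
    cbp G c v = if g0 G c v = 0 ∨ g0 G c v = 3 then ({3} : Multiset ℕ) else {1, 2} := by
  have h1 : cbp G c v = ({g0 G c v, 3 - g0 G c v} : Multiset ℕ).filter (fun m => m ≠ 0) := by
    unfold cbp
    congr 1
    have h0 : (Multiset.map (fun i => ((G.neighborFinset v).filter
        fun w => c s(v, w) = i).card) (Finset.univ : Finset (Fin 2)).val)
        = {((G.neighborFinset v).filter fun w => c s(v, w) = 0).card,
           ((G.neighborFinset v).filter fun w => c s(v, w) = 1).card} := rfl
    rw [h0, card_filter_one G c v hdeg]
    rfl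
  rw [h1]
  have := g0_le G c v hdeg
  set n := g0 G c v
  interval_cases n <;> decide
end Aux

section Aux2
variable {V : Type*} [Fintype V] [DecidableEq V] (G : SimpleGraph V) [DecidableRel G.Adj]
  (c : Sym2 V → Fin 2)

lemma side_lemma (hreg : ∀ v, G.degree v = 3) (b : V → Bool)
    (hbip : ∀ u v, G.Adj u v → b u ≠ b v)
    (hmono : ∀ v, (g0 G c v = 0 ∨ g0 G c v = 3) ↔ b v = true) :
    ∃ f : V → Bool, ∀ y, b y = false →
      (∃ x ∈ G.neighborFinset y, f x = true) ∧ (∃ x ∈ G.neighborFinset y, f x = false) := by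
  refine ⟨fun v => decide (∃ w ∈ G.neighborFinset v, c s(v, w) = 1), fun y hy => ?_⟩
  have hny : ¬ (g0 G c y = 0 ∨ g0 G c y = 3) := by
    intro h; rw [hmono y] at h; simp [h] at hy
  have hle := g0_le G c y (hreg y)
  -- an x with c s(y,x) = 1
  have h1 : ((G.neighborFinset y).filter fun w => c s(y, w) = 1).Nonempty := by
    rw [← Finset.card_pos, card_filter_one G c y (hreg y)]; omega
  have h0 : ((G.neighborFinset y).filter fun w => c s(y, w) = 0).Nonempty := by
    rw [← Finset.card_pos]
    have : ((G.neighborFinset y).filter fun w => c s(y, w) = 0).card = g0 G c y := rfl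
    omega
  obtain ⟨x, hx⟩ := h1
  obtain ⟨x', hx'⟩ := h0
  rw [Finset.mem_filter] at hx hx'
  constructor
  · refine ⟨x, hx.1, ?_⟩
    rw [decide_eq_true_eq]
    exact ⟨y, by
      rw [SimpleGraph.mem_neighborFinset] at hx ⊢
      exact hx.1.symm, by rw [Sym2.eq_swap]; exact hx.2⟩
  · refine ⟨x', hx'.1, ?_⟩
    rw [decide_eq_false_iff_not]
    rintro ⟨w, hw, hcw⟩
    -- x' is monochromatic of color 0
    have hadj : G.Adj y x' := (SimpleGraph.mem_neighborFinset _ _ _).1 hx'.1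
    have hbx' : b x' = true := by
      have := hbip y x' hadj; cases hb : b x' <;> simp_all
    have hmx' := (hmono x').2 hbx'
    have hymem : y ∈ (G.neighborFinset x').filter fun w => c s(x', w) = 0 := by
      rw [Finset.mem_filter, SimpleGraph.mem_neighborFinset]
      exact ⟨hadj.symm, by rw [Sym2.eq_swap]; exact hx'.2⟩
    have hpos : 0 < g0 G c x' := by
      unfold g0
      exact Finset.card_pos.2 ⟨y, hymem⟩
    have h3 : g0 G c x' = 3 := by rcases hmx' with h | h <;> omega
    have hall : (G.neighborFinset x').filter (fun w => c s(x', w) = 0) = G.neighborFinset x' := by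
      apply Finset.eq_of_subset_of_card_le (Finset.filter_subset _ _)
      rw [show (G.neighborFinset x').card = 3 from hreg x']
      unfold g0 at h3
      omega
    have hwmem : w ∈ (G.neighborFinset x').filter (fun w => c s(x', w) = 0) := by
      rw [hall]; exact hw
    have : c s(x', w) = 0 := (Finset.mem_filter.1 hwmem).2
    rw [hcw] at this
    exact absurd this (by decide)
end Aux2

theorem cubic_bipartite_dal_two_hypergraph_two_colorable
    {V : Type*} [Fintype V] [DecidableEq V] (G : SimpleGraph V) [DecidableRel G.Adj]
    (hconn : G.Connected) (hreg : ∀ v, G.degree v = 3)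
    (b : V → Bool) (hbip : ∀ u v, G.Adj u v → b u ≠ b v)
    (hc : ∃ c : Sym2 V → Fin 2, IsCBD G c) :
    (∃ f : V → Bool, ∀ y, b y = false →
        (∃ x ∈ G.neighborFinset y, f x = true) ∧ (∃ x ∈ G.neighborFinset y, f x = false)) ∨
    (∃ f : V → Bool, ∀ x, b x = true →
        (∃ y ∈ G.neighborFinset x, f y = true) ∧ (∃ y ∈ G.neighborFinset x, f y = false)) := by
  obtain ⟨c, hc⟩ := hc
  set P : V → Bool := fun v => decide (g0 G c v = 0 ∨ g0 G c v = 3) with hP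
  have hadjP : ∀ u v, G.Adj u v → P u ≠ P v := by
    intro u v hadj heq
    apply hc u v hadj
    rw [cbp_eval G c u (hreg u), cbp_eval G c v (hreg v)]
    by_cases hu : g0 G c u = 0 ∨ g0 G c u = 3 <;>
      by_cases hv : g0 G c v = 0 ∨ g0 G c v = 3 <;> simp_all
  have key : ∀ p q x y : Bool, p ≠ q → x ≠ y → (p == x) = (q == y) := by decide
  have key1 : ∀ p x : Bool, (p == x) = true → p = x := by decide
  have key2 : ∀ p x : Bool, (p == x) = false → p = !x := by decide
  have hQadj : ∀ u v, G.Adj u v → (P u == b u) = (P v == b v) := fun u v hadj =>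
    key _ _ _ _ (hadjP u v hadj) (hbip u v hadj)
  have hQconst : ∀ u v, (P u == b u) = (P v == b v) := by
    intro u v
    obtain ⟨p⟩ := hconn.preconnected u v
    induction p with
    | nil => rfl
    | cons h p ih => exact (hQadj _ _ h).trans ih
  have : Nonempty V := hconn.nonempty
  set v0 := Classical.arbitrary V
  cases hQ : (P v0 == b v0) with
  | true =>
    left
    apply side_lemma G c hreg b hbip
    intro v
    have h := key1 _ _ ((hQconst v v0).trans hQ)
    rw [← h]
    simp [hP]
  | false =>
    right
    have hmono : ∀ v, (g0 G c v = 0 ∨ g0 G c v = 3) ↔ (!b v) = true := by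
      intro v
      have h := key2 _ _ ((hQconst v v0).trans hQ)
      rw [← h]
      simp [hP]
    obtain ⟨f, hf⟩ := side_lemma G c hreg (fun v => !b v)
      (fun u v h => by
        have key3 : ∀ x y : Bool, x ≠ y → (!x) ≠ (!y) := by decide
        exact key3 _ _ (hbip u v h))
      hmono
    exact ⟨f, fun x hx => hf x (by simp [hx])⟩
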